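/- Let h₁: {0,...,4}* → {0,1}* be the 14-uniform morphism with h₁(0)=00110100101100, h₁(1)=00110100110010, h₁(2)=01001100101100, h₁(3)=10011011001011, h₁(4)=11010011011001. Then h₁ satisfies the inclusion property: if h₁(ab) = t·h₁(c)·u for letters a,b,c and words t,u, then t = ε or u = ε. -/
import Mathlib


def h₁ : Fin 5 → List (Fin 2)
  | 0 => [0,0,1,1,0,1,0,0,1,0,1,1,0,0]
  | 1 => [0,0,1,1,0,1,0,0,1,1,0,0,1,0]
  | 2 => [0,1,0,0,1,1,0,0,1,0,1,1,0,0]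
  | 3 => [1,0,0,1,1,0,1,1,0,0,1,0,1,1]
  | 4 => [1,1,0,1,0,0,1,1,0,1,1,0,0,1]

lemma h₁_len (a : Fin 5) : (h₁ a).length = 14 := by
  fin_cases a <;> rfl

lemma h₁_no_inner : ∀ a b c : Fin 5, ∀ i : Fin 13,
    ((h₁ a ++ h₁ b).drop (i.val + 1)).take 14 ≠ h₁ c := by decide

theorem h₁_inclusion_property :
    ∀ (a b c : Fin 5) (t u : List (Fin 2)),
      h₁ a ++ h₁ b = t ++ h₁ c ++ u → t = [] ∨ u = [] := by
  intro a b c t u h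
  by_contra hc
  push_neg at hc
  obtain ⟨ht, hu⟩ := hc
  rw [List.append_assoc] at h
  have hlen : (h₁ a ++ h₁ b).length = t.length + ((h₁ c).length + u.length) := by
    rw [h]; simp
  rw [List.length_append, h₁_len, h₁_len, h₁_len] at hlen
  have ht1 : 1 ≤ t.length := List.length_pos_iff.mpr ht
  have hu1 : 1 ≤ u.length := List.length_pos_iff.mpr hu
  have htlt : t.length - 1 < 13 := by omega
  have hdrop : (h₁ a ++ h₁ b).drop t.length = h₁ c ++ u := by
    rw [h, List.drop_append_of_le_length le_rfl, List.drop_length, List.nil_append]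
  have : ((h₁ a ++ h₁ b).drop ((t.length - 1) + 1)).take 14 = h₁ c := by
    have : t.length - 1 + 1 = t.length := by omega
    rw [this, hdrop, ← h₁_len c, List.take_left]
  exact h₁_no_inner a b c ⟨t.length - 1, htlt⟩ this
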